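/- arXiv:1301.6135 — 3 statements merged into one kernel-verified Lean document; each statement's English description precedes it below -/
import Mathlib

section
/- The function T(s) = (-2s + e^s - e^{-s}(2s + 3) + 2)/(4s²) is nonnegative for all real s ≠ 0, i.e., -2s + e^s - e^{-s}(2s + 3) + 2 ≥ 0 for all s ∈ ℝ. -/
/-! The numerator `N` of `T` is convex, since `eˢ N''(s) = e²ˢ - (1 + 2s) + 2 > 0`.
As `N 0 = N' 0 = 0`, the tangent line at `0` is the zero function, so `N ≥ 0`. -/

noncomputable def T : ℝ → ℝ := fun s =>
  (-2*s + Real.exp s - Real.exp (-s) * (2*s + 3) + 2) / (4*s^2)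

open Real Set

theorem ConvexOn.isMinOn_of_hasDerivAt_eq_zero {S : Set ℝ} {f : ℝ → ℝ} {x : ℝ}
    (hf : ConvexOn ℝ S f) (hx : x ∈ interior S) (hf' : HasDerivAt f 0 x) : IsMinOn f S x :=
  hf.isMinOn_of_rightDeriv_eq_zero hx <|
    hf'.hasDerivWithinAt.derivWithin (uniqueDiffWithinAt_Ioi x)

namespace TNumerator

noncomputable def N (s : ℝ) : ℝ := -2*s + exp s - exp (-s) * (2*s + 3) + 2

noncomputable def N' (s : ℝ) : ℝ := exp s + exp (-s) * (2*s + 1) - 2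

noncomputable def N'' (s : ℝ) : ℝ := exp s + exp (-s) * (1 - 2*s)

theorem hasDerivAt_N (s : ℝ) : HasDerivAt N (N' s) s :=
  ((((hasDerivAt_id' s).const_mul (-2)).add (hasDerivAt_exp s)).sub
    ((hasDerivAt_neg' s).exp.mul (((hasDerivAt_id' s).const_mul 2).add_const 3))).add_const 2
    |>.congr_deriv (by rw [N']; ring)

theorem hasDerivAt_N' (s : ℝ) : HasDerivAt N' (N'' s) s :=
  ((hasDerivAt_exp s).add
    ((hasDerivAt_neg' s).exp.mul (((hasDerivAt_id' s).const_mul 2).add_const 1))).sub_const 2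
    |>.congr_deriv (by rw [N'']; ring)

theorem N''_pos (s : ℝ) : 0 < N'' s := by
  have key : N'' s = exp (-s) * (exp (2*s) - (2*s + 1) + 2) := by
    rw [N'', show exp s = exp (-s) * exp (2*s) by rw [← exp_add]; ring_nf]
    ring
  rw [key]
  exact mul_pos (exp_pos _) (by linarith [add_one_le_exp (2*s)])

theorem convexOn_N : ConvexOn ℝ univ N :=
  convexOn_of_hasDerivWithinAt2_nonneg convex_univ
    (fun s _ => (hasDerivAt_N s).continuousAt.continuousWithinAt)
    (fun s _ => (hasDerivAt_N s).hasDerivWithinAt) (fun s _ => (hasDerivAt_N' s).hasDerivWithinAt)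
    (fun s _ => (N''_pos s).le)

theorem N_nonneg (s : ℝ) : 0 ≤ N s := by
  have hmin : IsMinOn N univ 0 :=
    convexOn_N.isMinOn_of_hasDerivAt_eq_zero (by simp) <|
      (hasDerivAt_N 0).congr_deriv (by norm_num [N'])
  have h0 : N 0 = 0 := by norm_num [N]
  exact h0 ▸ hmin (mem_univ s)

end TNumerator

theorem stmt_10 :
    (∀ s : ℝ, s ≠ 0 → 0 ≤ T s) ∧
    (∀ s : ℝ, 0 ≤ -2*s + Real.exp s - Real.exp (-s) * (2*s + 3) + 2) :=
  ⟨fun s _ => div_nonneg (TNumerator.N_nonneg s) (by positivity), TNumerator.N_nonneg⟩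
end

section
/- For all real s ≠ 0, the numerator -2s + e^s - e^{-s}(2s+3) + 2 of T is strictly positive. -/
theorem stmt_13 (s : ℝ) (hs : s ≠ 0) :
    0 < -2*s + Real.exp s - Real.exp (-s) * (2*s + 3) + 2 := by
  have hx : (0:ℝ) < Real.exp s := Real.exp_pos s
  have hy : (0:ℝ) < Real.exp (-s) := Real.exp_pos (-s)
  have hxy : Real.exp s * Real.exp (-s) = 1 := by
    rw [← Real.exp_add]; simp
  have key : 0 < Real.exp s * (-2*s + Real.exp s - Real.exp (-s) * (2*s + 3) + 2) := by
    rcases le_or_gt s (-3/2) with h | h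
    · nlinarith [mul_pos hx hx, mul_pos hx hy]
    · have h1 : 1 + s/3 < Real.exp (s/3) := by
        have := Real.add_one_lt_exp (show s/3 ≠ 0 by intro h'; apply hs; linarith)
        linarith
      have h0 : (0:ℝ) ≤ 1 + s/3 := by linarith
      have h3 : (1 + s/3)^3 < Real.exp s := by
        have hp : (1 + s/3)^3 < (Real.exp (s/3))^3 :=
          pow_lt_pow_left₀ h1 h0 (by norm_num)
        have he : (Real.exp (s/3))^3 = Real.exp s := by
          rw [← Real.exp_nat_mul]; congr 1; push_cast; ring
        linarith
      have hd : 0 < Real.exp s - (1 + s/3)^3 := by linarith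
      have hB : (0:ℝ) ≤ ((s^3 + 9*s^2)^2 + s^2*(108*s + 243))/729 := by
        have hlin : (0:ℝ) ≤ 108*s + 243 := by linarith
        positivity
      have hS : (0:ℝ) < 4 + 2*s^2/3 + 2*s^3/27 := by
        nlinarith [mul_nonneg (sq_nonneg s) (show (0:ℝ) ≤ 9 + s by linarith)]
      nlinarith [hB, mul_pos hd hS, sq_nonneg (Real.exp s - (1 + s/3)^3), hxy]
  nlinarith [key, hx]
end

section
/- If a sequence of positive reals μ_n satisfies n·μ_n → c as n → ∞ for some c ≥ 0, then (1/log N) Σ_{n=1}^N μ_n → c as N → ∞. -/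
/-! Writing `μ n = n⁻¹ * (n * μ n)` turns `(∑ n ∈ Icc 1 N, μ n) / H_N`, with `H_N` the harmonic
number, into a weighted Cesàro mean of the convergent sequence `n * μ n` with weights `1 / n`.
Since these weights have divergent sum, the mean tends to `c`; and `H_N / log N → 1` because
`H_N - log N` tends to the Euler–Mascheroni constant. -/

open Filter Finset Asymptotics Real Topology

theorem Filter.Tendsto.weighted_cesaro {u w : ℕ → ℝ} {l : ℝ} (h : Tendsto u atTop (𝓝 l))
    (hw : 0 ≤ w) (hW : Tendsto (fun n => ∑ i ∈ range n, w i) atTop atTop) :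
    Tendsto (fun n => (∑ i ∈ range n, w i * u i) / ∑ i ∈ range n, w i) atTop (𝓝 l) := by
  have hsmall : (fun i => w i * (u i - l)) =o[atTop] w := by
    simpa [mul_comm] using
      (isBigO_refl w atTop).mul_isLittleO ((isLittleO_one_iff ℝ).2 (tendsto_sub_nhds_zero_iff.2 h))
  have hdiff := (hsmall.sum_range hw hW).tendsto_div_nhds_zero.add_const l
  rw [zero_add] at hdiff
  refine hdiff.congr' ?_
  filter_upwards [hW.eventually_gt_atTop 0] with n hn
  simp only [mul_sub, sum_sub_distrib, ← sum_mul]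
  field_simp
  ring

lemma harmonic_eq_sum_range_succ_inv (n : ℕ) :
    (harmonic n : ℝ) = ∑ i ∈ range (n + 1), (i : ℝ)⁻¹ := by
  simp [harmonic, sum_range_succ']

lemma tendsto_harmonic_atTop : Tendsto (fun n => (harmonic n : ℝ)) atTop atTop := by
  simpa using tendsto_harmonic_sub_log.add_atTop (tendsto_log_atTop.comp tendsto_natCast_atTop_atTop)

lemma tendsto_sum_range_inv_atTop :
    Tendsto (fun n => ∑ i ∈ range n, (i : ℝ)⁻¹) atTop atTop := by
  rw [← tendsto_add_atTop_iff_nat 1]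
  simpa only [← harmonic_eq_sum_range_succ_inv] using tendsto_harmonic_atTop

lemma tendsto_harmonic_div_log : Tendsto (fun n => (harmonic n : ℝ) / log n) atTop (𝓝 1) := by
  have hlog : Tendsto (fun n : ℕ => log n) atTop atTop :=
    tendsto_log_atTop.comp tendsto_natCast_atTop_atTop
  have h := (tendsto_harmonic_sub_log.div_atTop hlog).add_const 1
  rw [zero_add] at h
  refine h.congr' ?_
  filter_upwards [hlog.eventually_gt_atTop 0] with n hn
  field_simp
  ring

lemma sum_Icc_one_eq_sum_range_inv_mul (μ : ℕ → ℝ) (N : ℕ) :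
    ∑ n ∈ Icc 1 N, μ n = ∑ i ∈ range (N + 1), (i : ℝ)⁻¹ * (i * μ i) := by
  rw [Nat.range_succ_eq_Icc_zero, Icc_eq_cons_Ioc N.zero_le, sum_cons, ← Icc_add_one_left_eq_Ioc]
  simp only [CharP.cast_eq_zero, inv_zero, zero_mul, zero_add]
  refine sum_congr rfl fun n hn => ?_
  have hn0 : (n : ℝ) ≠ 0 := Nat.cast_ne_zero.2 (Nat.one_le_iff_ne_zero.1 (mem_Icc.1 hn).1)
  rw [inv_mul_cancel_left₀ hn0]

theorem stmt_16_general (μ : ℕ → ℝ) (c : ℝ)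
    (h : Filter.Tendsto (fun n : ℕ => (n : ℝ) * μ n) Filter.atTop (nhds c)) :
    Filter.Tendsto (fun N : ℕ => (∑ n ∈ Finset.Icc 1 N, μ n) / Real.log N)
      Filter.atTop (nhds c) := by
  have hcesaro : Tendsto (fun N => (∑ n ∈ Icc 1 N, μ n) / harmonic N) atTop (𝓝 c) := by
    simpa only [Function.comp_def, ← harmonic_eq_sum_range_succ_inv,
      ← sum_Icc_one_eq_sum_range_inv_mul] using
      (h.weighted_cesaro (fun i => inv_nonneg.2 i.cast_nonneg) tendsto_sum_range_inv_atTop).comp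
        (tendsto_add_atTop_nat 1)
  have hlim := hcesaro.mul tendsto_harmonic_div_log
  rw [mul_one] at hlim
  refine hlim.congr' ?_
  filter_upwards [tendsto_harmonic_atTop.eventually_gt_atTop 0] with N hN
  exact div_mul_div_cancel₀ hN.ne'

theorem stmt_16 (μ : ℕ → ℝ) (hpos : ∀ n, 0 < μ n) (c : ℝ) (hc : 0 ≤ c)
    (h : Filter.Tendsto (fun n : ℕ => (n : ℝ) * μ n) Filter.atTop (nhds c)) :
    Filter.Tendsto (fun N : ℕ => (∑ n ∈ Finset.Icc 1 N, μ n) / Real.log N)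
      Filter.atTop (nhds c) :=
  stmt_16_general μ c h
end
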